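/- Let x_k be the k-th iterate of the randomized extended Kaczmarz method (Algorithm: z_k = z_{k-1} - (A_{(j)}^T z_{k-1}/||A_{(j)}||^2)A_{(j)} with column j sampled with probability ||A_{(j)}||^2/||A||_F^2, then x_k = x_{k-1} - ((A^{(i)} x_{k-1} - b^{(i)} + z_k^{(i)})/||A^{(i)}||^2)(A^{(i)})^T with row i sampled with probability ||A^{(i)}||^2/||A||_F^2), with x_0 ∈ range(A^T) and z_0 ∈ b + range(A). If v_ℓ is a right singular vector of A with singular value σ_ℓ and x_⋆ = A^† b, then E[⟨x_k - x_⋆, v_ℓ⟩] = (k/||A||_F^2)(1 - σ_ℓ^2/||A||_F^2)^k ⟨-A^T z_0, v_ℓ⟩ + (1 - σ_ℓ^2/||A||_F^2)^k ⟨x_0 - x_⋆, v_ℓ⟩. -/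

import Mathlib

/-!
Averaged over a row drawn with probability `‖Aᵢ‖² / ‖A‖_F²`, a Kaczmarz projection
`x ↦ x - (rᵢ / ‖Aᵢ‖²) Aᵢ` becomes the gradient step `x ↦ x - Aᵀ r / ‖A‖_F²`. Pairing with the
eigenvector `v` of `AᵀA` turns `AᵀA` into `σ²`, and the normal equations `Aᵀ (b - A x⋆) = 0`
remove `b`. With `q = 1 - σ² / ‖A‖_F²`, one averaged REK step therefore multiplies `⟨Aᵀ z, v⟩`
by `q`, and multiplies `⟨x - x⋆, v⟩` by `q` while subtracting `⟨Aᵀ z_new, v⟩ / ‖A‖_F²`.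
Solving these two scalar recurrences gives the closed form.
-/

open Matrix BigOperators Finset

noncomputable def frob2 {m n : ℕ} (A : Matrix (Fin m) (Fin n) ℝ) : ℝ :=
  ∑ i, ∑ j, (A i j) ^ 2

noncomputable def colNorm2 {m n : ℕ} (A : Matrix (Fin m) (Fin n) ℝ) (j : Fin n) : ℝ :=
  ∑ i, (A i j) ^ 2

noncomputable def rowNorm2 {m n : ℕ} (A : Matrix (Fin m) (Fin n) ℝ) (i : Fin m) : ℝ :=
  ∑ j, (A i j) ^ 2

noncomputable def colStep {m n : ℕ} (A : Matrix (Fin m) (Fin n) ℝ) (j : Fin n)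
    (z : Fin m → ℝ) : Fin m → ℝ :=
  z - ((Aᵀ j ⬝ᵥ z) / colNorm2 A j) • Aᵀ j

/-- One REK step: first an RK step on `Aᵀ z = 0` using column `j = p.1`, then an RK
step on `A x = b - z_k` using row `i = p.2` (with the freshly updated `z`). -/
noncomputable def rekStep {m n : ℕ} (A : Matrix (Fin m) (Fin n) ℝ)
    (b : Fin m → ℝ) (p : Fin n × Fin m) (s : (Fin m → ℝ) × (Fin n → ℝ)) :
    (Fin m → ℝ) × (Fin n → ℝ) :=
  let z' := colStep A p.1 s.1
  (z', s.2 - ((A p.2 ⬝ᵥ s.2 - b p.2 + z' p.2) / rowNorm2 A p.2) • A p.2)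

/-- REK iterates: the head of the list is the pair of indices of the most recent step. -/
noncomputable def rekIter {m n : ℕ} (A : Matrix (Fin m) (Fin n) ℝ)
    (b : Fin m → ℝ) (s0 : (Fin m → ℝ) × (Fin n → ℝ)) :
    List (Fin n × Fin m) → (Fin m → ℝ) × (Fin n → ℝ)
  | [] => s0
  | p :: l => rekStep A b p (rekIter A b s0 l)

/-- Probability of choosing the index pair `p` at a given REK step. -/
noncomputable def rekProb {m n : ℕ} (A : Matrix (Fin m) (Fin n) ℝ)
    (p : Fin n × Fin m) : ℝ :=
  (colNorm2 A p.1 / frob2 A) * (rowNorm2 A p.2 / frob2 A)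

section IterExpect

variable {P S : Type*} [Fintype P]

noncomputable def iterExpect (w : P → ℝ) (step : P → S → S) (s₀ : S) (f : S → ℝ) (k : ℕ) :
    ℝ :=
  ∑ ω : Fin k → P, (∏ t, w (ω t)) * f ((List.ofFn ω).foldr step s₀)

variable (w : P → ℝ) (step : P → S → S) (s₀ : S)

theorem iterExpect_zero (f : S → ℝ) : iterExpect w step s₀ f 0 = f s₀ := by
  simp [iterExpect]

theorem iterExpect_succ (f : S → ℝ) (k : ℕ) :
    iterExpect w step s₀ f (k + 1)
      = iterExpect w step s₀ (fun s => ∑ p, w p * f (step p s)) k := by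
  rw [iterExpect, ← (Fin.consEquiv fun _ => P).sum_comp, Fintype.sum_prod_type, sum_comm]
  simp only [iterExpect, mul_sum]
  refine sum_congr rfl fun ω _ => sum_congr rfl fun p _ => ?_
  simp only [Fin.consEquiv_apply, Fin.prod_univ_succ, List.ofFn_succ, Fin.cons_zero,
    Fin.cons_succ, List.foldr_cons]
  ring

theorem iterExpect_const_mul (c : ℝ) (f : S → ℝ) (k : ℕ) :
    iterExpect w step s₀ (fun s => c * f s) k = c * iterExpect w step s₀ f k := by
  simp only [iterExpect, mul_sum, mul_left_comm]

theorem iterExpect_sub (f g : S → ℝ) (k : ℕ) :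
    iterExpect w step s₀ (fun s => f s - g s) k
      = iterExpect w step s₀ f k - iterExpect w step s₀ g k := by
  simp only [iterExpect, mul_sub, sum_sub_distrib]

end IterExpect

theorem eq_pow_mul_sub_of_succ_eq {X : ℕ → ℝ} {q d : ℝ}
    (h : ∀ k, X (k + 1) = q * X k - d * q ^ (k + 1)) (k : ℕ) :
    X k = q ^ k * X 0 - k * d * q ^ k := by
  induction k with
  | zero => simp
  | succ k ih => rw [h, ih]; push_cast; ring

section Kaczmarz

variable {m n : ℕ} (A : Matrix (Fin m) (Fin n) ℝ)

theorem frob2_transpose : frob2 Aᵀ = frob2 A := sum_comm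

theorem frob2_ne_zero (hA : A ≠ 0) : frob2 A ≠ 0 := by
  contrapose! hA
  ext i j
  have hrow := (sum_eq_zero_iff_of_nonneg fun i _ => sum_nonneg fun j _ => sq_nonneg (A i j)).1
    hA i (mem_univ i)
  simpa using (sum_eq_zero_iff_of_nonneg fun j _ => sq_nonneg (A i j)).1 hrow j (mem_univ j)

theorem eq_zero_of_rowNorm2_eq_zero {i : Fin m} (h : rowNorm2 A i = 0) : A i = 0 := by
  ext j
  simpa using (sum_eq_zero_iff_of_nonneg fun j _ => sq_nonneg (A i j)).1 h j (mem_univ j)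

variable {A}

theorem sum_rowNorm2_div_frob2 (hF : frob2 A ≠ 0) : ∑ i, rowNorm2 A i / frob2 A = 1 := by
  rw [← sum_div]
  exact div_self hF

theorem sum_colNorm2_div_frob2 (hF : frob2 A ≠ 0) : ∑ j, colNorm2 A j / frob2 A = 1 := by
  rw [← frob2_transpose] at hF ⊢
  exact sum_rowNorm2_div_frob2 hF

theorem sum_rowNorm2_div_smul_kaczmarz (hF : frob2 A ≠ 0) (r : Fin m → ℝ) (x : Fin n → ℝ) :
    ∑ i, (rowNorm2 A i / frob2 A) • (x - (r i / rowNorm2 A i) • A i)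
      = x - (frob2 A)⁻¹ • (Aᵀ *ᵥ r) := by
  have hterm : ∀ i, (rowNorm2 A i / frob2 A) • (x - (r i / rowNorm2 A i) • A i)
      = (rowNorm2 A i / frob2 A) • x - (frob2 A)⁻¹ • (r i • A i) := by
    intro i
    -- a zero row carries weight zero, so the junk value `r i / 0 = 0` is harmless
    by_cases h : rowNorm2 A i = 0
    · simp [h, eq_zero_of_rowNorm2_eq_zero A h]
    · rw [smul_sub, smul_smul, smul_smul]
      congr 2
      field_simp
  simp_rw [hterm, sum_sub_distrib, ← sum_smul, ← smul_sum, sum_rowNorm2_div_frob2 hF, one_smul,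
    mulVec_transpose, vecMul_eq_sum]

theorem sum_colNorm2_div_smul_colStep (hF : frob2 A ≠ 0) (z : Fin m → ℝ) :
    ∑ j, (colNorm2 A j / frob2 A) • colStep A j z = z - (frob2 A)⁻¹ • (A *ᵥ (Aᵀ *ᵥ z)) := by
  have h := sum_rowNorm2_div_smul_kaczmarz (A := Aᵀ) (by rwa [frob2_transpose]) (Aᵀ *ᵥ z) z
  rwa [frob2_transpose, transpose_transpose] at h

end Kaczmarz

theorem rekIter_eq_foldr {m n : ℕ} (A : Matrix (Fin m) (Fin n) ℝ) (b : Fin m → ℝ)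
    (s₀ : (Fin m → ℝ) × (Fin n → ℝ)) (l : List (Fin n × Fin m)) :
    rekIter A b s₀ l = l.foldr (rekStep A b) s₀ := by
  induction l with
  | nil => rfl
  | cons p l ih => rw [rekIter, ih, List.foldr_cons]

section Projection

variable {m n : ℕ} {A : Matrix (Fin m) (Fin n) ℝ} {σ : ℝ} {v : Fin n → ℝ}

theorem transpose_mulVec_mulVec_dotProduct (hv : Aᵀ *ᵥ (A *ᵥ v) = σ ^ 2 • v) (y : Fin n → ℝ) :
    (Aᵀ *ᵥ (A *ᵥ y)) ⬝ᵥ v = σ ^ 2 * (y ⬝ᵥ v) := by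
  rw [dotProduct_comm, dotProduct_transpose_mulVec, dotProduct_comm,
    ← dotProduct_transpose_mulVec, hv, dotProduct_smul, smul_eq_mul]

theorem sum_colNorm2_div_mul_colStep (hF : frob2 A ≠ 0) (hv : Aᵀ *ᵥ (A *ᵥ v) = σ ^ 2 • v)
    (z : Fin m → ℝ) :
    ∑ j, colNorm2 A j / frob2 A * ((Aᵀ *ᵥ colStep A j z) ⬝ᵥ v)
      = (1 - σ ^ 2 / frob2 A) * ((Aᵀ *ᵥ z) ⬝ᵥ v) := by
  calc ∑ j, colNorm2 A j / frob2 A * ((Aᵀ *ᵥ colStep A j z) ⬝ᵥ v)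
      = (Aᵀ *ᵥ ∑ j, (colNorm2 A j / frob2 A) • colStep A j z) ⬝ᵥ v := by
        simp only [mulVec_sum, sum_dotProduct, mulVec_smul, smul_dotProduct, smul_eq_mul]
    _ = (1 - σ ^ 2 / frob2 A) * ((Aᵀ *ᵥ z) ⬝ᵥ v) := by
        rw [sum_colNorm2_div_smul_colStep hF, mulVec_sub, mulVec_smul, sub_dotProduct,
          smul_dotProduct, transpose_mulVec_mulVec_dotProduct hv, smul_eq_mul]
        ring

theorem sum_rowNorm2_div_mul_rowStep (hF : frob2 A ≠ 0) (hv : Aᵀ *ᵥ (A *ᵥ v) = σ ^ 2 • v)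
    {b : Fin m → ℝ} {xs : Fin n → ℝ} (hls : Aᵀ *ᵥ (b - A *ᵥ xs) = 0)
    (z : Fin m → ℝ) (x : Fin n → ℝ) :
    ∑ i, rowNorm2 A i / frob2 A
        * ((x - ((A i ⬝ᵥ x - b i + z i) / rowNorm2 A i) • A i - xs) ⬝ᵥ v)
      = (1 - σ ^ 2 / frob2 A) * ((x - xs) ⬝ᵥ v) - (frob2 A)⁻¹ * ((Aᵀ *ᵥ z) ⬝ᵥ v) := by
  have hr : Aᵀ *ᵥ (A *ᵥ x - b + z) = Aᵀ *ᵥ (A *ᵥ (x - xs)) + Aᵀ *ᵥ z := by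
    rw [show A *ᵥ x - b + z = A *ᵥ (x - xs) - (b - A *ᵥ xs) + z by rw [mulVec_sub]; abel,
      mulVec_add, mulVec_sub, hls, sub_zero]
  calc ∑ i, rowNorm2 A i / frob2 A
        * ((x - ((A i ⬝ᵥ x - b i + z i) / rowNorm2 A i) • A i - xs) ⬝ᵥ v)
      = (∑ i, (rowNorm2 A i / frob2 A) • (x - ((A *ᵥ x - b + z) i / rowNorm2 A i) • A i) - xs)
          ⬝ᵥ v := by
        rw [sub_dotProduct, sum_dotProduct]
        simp only [sub_dotProduct _ xs, mul_sub, sum_sub_distrib, ← sum_mul,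
          sum_rowNorm2_div_frob2 hF, one_mul, smul_dotProduct, smul_eq_mul]
        rfl
    _ = (1 - σ ^ 2 / frob2 A) * ((x - xs) ⬝ᵥ v) - (frob2 A)⁻¹ * ((Aᵀ *ᵥ z) ⬝ᵥ v) := by
        rw [sum_rowNorm2_div_smul_kaczmarz hF, hr, sub_right_comm, sub_dotProduct,
          smul_dotProduct, add_dotProduct, transpose_mulVec_mulVec_dotProduct hv, smul_eq_mul]
        ring

theorem sum_rekProb_mul (f : Fin n × Fin m → ℝ) :
    ∑ p, rekProb A p * f p
      = ∑ j, colNorm2 A j / frob2 A * ∑ i, rowNorm2 A i / frob2 A * f (j, i) := by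
  simp only [rekProb, Fintype.sum_prod_type, mul_sum, mul_assoc]

theorem sum_rekProb_mul_rekStep_fst (hF : frob2 A ≠ 0) (hv : Aᵀ *ᵥ (A *ᵥ v) = σ ^ 2 • v)
    (b : Fin m → ℝ) (s : (Fin m → ℝ) × (Fin n → ℝ)) :
    ∑ p, rekProb A p * ((Aᵀ *ᵥ (rekStep A b p s).1) ⬝ᵥ v)
      = (1 - σ ^ 2 / frob2 A) * ((Aᵀ *ᵥ s.1) ⬝ᵥ v) := by
  simp only [sum_rekProb_mul, rekStep, ← sum_mul, sum_rowNorm2_div_frob2 hF, one_mul]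
  exact sum_colNorm2_div_mul_colStep hF hv s.1

theorem sum_rekProb_mul_rekStep_snd (hF : frob2 A ≠ 0) (hv : Aᵀ *ᵥ (A *ᵥ v) = σ ^ 2 • v)
    {b : Fin m → ℝ} {xs : Fin n → ℝ} (hls : Aᵀ *ᵥ (b - A *ᵥ xs) = 0)
    (s : (Fin m → ℝ) × (Fin n → ℝ)) :
    ∑ p, rekProb A p * (((rekStep A b p s).2 - xs) ⬝ᵥ v)
      = (1 - σ ^ 2 / frob2 A) * ((s.2 - xs) ⬝ᵥ v)
        - (frob2 A)⁻¹ * ((1 - σ ^ 2 / frob2 A) * ((Aᵀ *ᵥ s.1) ⬝ᵥ v)) := by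
  simp only [sum_rekProb_mul, rekStep, sum_rowNorm2_div_mul_rowStep hF hv hls, mul_sub,
    sum_sub_distrib, ← sum_mul, sum_colNorm2_div_frob2 hF, one_mul, mul_left_comm _ (frob2 A)⁻¹,
    ← mul_sum, sum_colNorm2_div_mul_colStep hF hv]

end Projection

theorem rek_projected_error_closed_form_general {m n : ℕ}
    (A : Matrix (Fin m) (Fin n) ℝ) (hA : A ≠ 0)
    (b : Fin m → ℝ) (xs : Fin n → ℝ)
    (hls : Aᵀ *ᵥ (b - A *ᵥ xs) = 0)
    (x0 : Fin n → ℝ)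
    (z0 : Fin m → ℝ)
    (σ : ℝ) (v : Fin n → ℝ)
    (hv : Aᵀ *ᵥ (A *ᵥ v) = σ ^ 2 • v)
    (k : ℕ) :
    ∑ ω : Fin k → Fin n × Fin m,
        (∏ t, rekProb A (ω t))
          * (((rekIter A b (z0, x0) (List.ofFn ω)).2 - xs) ⬝ᵥ v)
      = ((k : ℝ) / frob2 A) * (1 - σ ^ 2 / frob2 A) ^ k * ((-(Aᵀ *ᵥ z0)) ⬝ᵥ v)
        + (1 - σ ^ 2 / frob2 A) ^ k * ((x0 - xs) ⬝ᵥ v) := by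
  have hF := frob2_ne_zero A hA
  set q := 1 - σ ^ 2 / frob2 A
  let E := iterExpect (rekProb A) (rekStep A b) (z0, x0)
  have hZ (k : ℕ) : E (fun s => (Aᵀ *ᵥ s.1) ⬝ᵥ v) k = q ^ k * ((Aᵀ *ᵥ z0) ⬝ᵥ v) := by
    induction k with
    | zero => simp [E, iterExpect_zero]
    | succ k ih =>
      simp only [E, iterExpect_succ, sum_rekProb_mul_rekStep_fst hF hv,
        iterExpect_const_mul] at ih ⊢
      rw [ih, pow_succ]
      ring
  have hX (k : ℕ) : E (fun s => (s.2 - xs) ⬝ᵥ v) (k + 1)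
      = q * E (fun s => (s.2 - xs) ⬝ᵥ v) k - (frob2 A)⁻¹ * ((Aᵀ *ᵥ z0) ⬝ᵥ v) * q ^ (k + 1) := by
    have hZk := hZ k
    simp only [E, iterExpect_succ, sum_rekProb_mul_rekStep_snd hF hv hls, iterExpect_sub,
      iterExpect_const_mul] at hZk ⊢
    rw [hZk, pow_succ]
    ring
  simp only [rekIter_eq_foldr]
  change E (fun s => (s.2 - xs) ⬝ᵥ v) k = _
  rw [eq_pow_mul_sub_of_succ_eq hX k]
  simp only [E, iterExpect_zero, neg_dotProduct]
  ring

/-- closed form for the expected projected error of REK. With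
`x⋆ = A†b` (characterized by `Aᵀ(b - A x⋆) = 0` and `x⋆ ∈ range Aᵀ`),
`x_0 ∈ range Aᵀ`, `z_0 ∈ b + range A`, and `vℓ` a unit right singular vector of `A`
with singular value `σℓ > 0`,
`E[⟨x_k - x⋆, vℓ⟩] = (k/‖A‖_F²)(1-σℓ²/‖A‖_F²)^k ⟨-Aᵀ z_0, vℓ⟩
  + (1-σℓ²/‖A‖_F²)^k ⟨x_0 - x⋆, vℓ⟩`. -/
theorem rek_projected_error_closed_form {m n : ℕ}
    (A : Matrix (Fin m) (Fin n) ℝ) (hA : A ≠ 0)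
    (b : Fin m → ℝ) (xs : Fin n → ℝ)
    (hls : Aᵀ *ᵥ (b - A *ᵥ xs) = 0) (hxs : ∃ y, xs = Aᵀ *ᵥ y)
    (x0 : Fin n → ℝ) (hx0 : ∃ u, x0 = Aᵀ *ᵥ u)
    (z0 : Fin m → ℝ) (hz0 : ∃ y, z0 = b + A *ᵥ y)
    (σ : ℝ) (hσ : 0 < σ) (v : Fin n → ℝ)
    (hv : Aᵀ *ᵥ (A *ᵥ v) = σ ^ 2 • v) (hvunit : v ⬝ᵥ v = 1)
    (k : ℕ) :
    ∑ ω : Fin k → Fin n × Fin m,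
        (∏ t, rekProb A (ω t))
          * (((rekIter A b (z0, x0) (List.ofFn ω)).2 - xs) ⬝ᵥ v)
      = ((k : ℝ) / frob2 A) * (1 - σ ^ 2 / frob2 A) ^ k * ((-(Aᵀ *ᵥ z0)) ⬝ᵥ v)
        + (1 - σ ^ 2 / frob2 A) ^ k * ((x0 - xs) ⬝ᵥ v) :=
  rek_projected_error_closed_form_general A hA b xs hls x0 z0 σ v hv k
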